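/- arXiv:0707.4328 — 2 statements merged into one kernel-verified Lean document; each statement's English description precedes it below -/
import Mathlib

section
/- For nonnegative integers n and integers r, t with r, t ≤ n, ∑_{s=0}^{n-r} qbinom(n-r, s) · qbinom(n-s, t) · q^{C(s,2)} · (-1)^s = q^{(n-r)(n-t)} · qbinom(r, n-t), as an identity of polynomials in q. -/
/-!
Write `S(m, n, t)` for the sum with `n - r` replaced by `m`. Expanding `qbin (m + 1) s` by the
`q`-Pascal rule gives `S(m + 1, n, t) = S(m, n, t) - q ^ m * S(m, n - 1, t)`, and the other
`q`-Pascal rule shows that `q ^ (m * (n - t)) * qbin (n - m) (n - t)` obeys the same recursion.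
At `m = 0` both sides agree by the symmetry `qbin n t = qbin n (n - t)`.
-/

open Finset

/-- The Gaussian (q-)binomial coefficient as a rational function in `q = RatFunc.X`. -/
noncomputable def qbin (a b : ℕ) : RatFunc ℚ :=
  if b ≤ a then ∏ i ∈ Finset.range b,
    (1 - RatFunc.X ^ (a - i)) / (1 - RatFunc.X ^ (i + 1)) else 0

theorem RatFunc.one_sub_X_pow_ne_zero {K : Type*} [Field K] {k : ℕ} (hk : k ≠ 0) :
    (1 : RatFunc K) - X ^ k ≠ 0 := by
  rw [sub_ne_zero, ne_comm, ← algebraMap_X, ← map_pow,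
    ← map_one (algebraMap (Polynomial K) (RatFunc K)), (algebraMap_injective K).ne_iff]
  intro h
  simpa [hk] using congrArg Polynomial.natDegree h

local notation "q" => (RatFunc.X : RatFunc ℚ)

theorem qbin_zero_right (a : ℕ) : qbin a 0 = 1 := by simp [qbin]

theorem qbin_of_lt {a b : ℕ} (h : a < b) : qbin a b = 0 := by
  rw [qbin, if_neg h.not_ge]

-- No hypothesis on `b`: for `b = a` the truncated exponent makes the factor `1 - q ^ 0` vanish.
theorem qbin_succ_right (a b : ℕ) :
    qbin a (b + 1) = qbin a b * (1 - q ^ (a - b)) / (1 - q ^ (b + 1)) := by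
  rcases lt_trichotomy b a with h | rfl | h
  · rw [qbin, qbin, if_pos (Nat.succ_le_of_lt h), if_pos h.le, prod_range_succ, mul_div_assoc]
  · simp [qbin_of_lt (Nat.lt_succ_self b)]
  · simp [qbin_of_lt h, qbin_of_lt (h.trans (Nat.lt_succ_self b))]

theorem qbin_succ_succ (a b : ℕ) :
    qbin (a + 1) (b + 1) = qbin a b * (1 - q ^ (a + 1)) / (1 - q ^ (b + 1)) := by
  induction b with
  | zero => simp [qbin_succ_right, qbin_zero_right]
  | succ b ih =>
    rw [qbin_succ_right, ih, qbin_succ_right, Nat.add_sub_add_right]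
    ring

theorem qbin_self (a : ℕ) : qbin a a = 1 := by
  induction a with
  | zero => exact qbin_zero_right 0
  | succ a ih =>
    rw [qbin_succ_succ, ih, one_mul, div_self (RatFunc.one_sub_X_pow_ne_zero a.succ_ne_zero)]

theorem qbin_sub_self {a b : ℕ} (h : b ≤ a) : qbin a (a - b) = qbin a b := by
  induction b with
  | zero => rw [Nat.sub_zero, qbin_self, qbin_zero_right]
  | succ b ih =>
    obtain ⟨c, rfl⟩ : ∃ c, a = b + 1 + c := ⟨a - (b + 1), by omega⟩
    have hc := qbin_succ_right (b + 1 + c) c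
    rw [show b + 1 + c - b = c + 1 by omega] at ih
    rw [show b + 1 + c - c = b + 1 by omega, ih (by omega)] at hc
    rw [qbin_succ_right, show b + 1 + c - (b + 1) = c by omega,
      show b + 1 + c - b = c + 1 by omega, hc]
    field_simp [RatFunc.one_sub_X_pow_ne_zero]

theorem qbin_succ_succ_eq_add (a b : ℕ) :
    qbin (a + 1) (b + 1) = qbin a (b + 1) + q ^ (a - b) * qbin a b := by
  rcases le_or_gt b a with h | h
  · have hpow : q ^ (a + 1) = q ^ (a - b) * q ^ (b + 1) := by rw [← pow_add]; congr 1; omega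
    rw [qbin_succ_succ, qbin_succ_right, hpow]
    field_simp [RatFunc.one_sub_X_pow_ne_zero]
    ring
  · rw [qbin_of_lt h, qbin_of_lt (by omega), qbin_of_lt (by omega)]
    ring

theorem qbin_succ_succ_eq_add' (a b : ℕ) :
    qbin (a + 1) (b + 1) = qbin a b + q ^ (b + 1) * qbin a (b + 1) := by
  rw [qbin_succ_succ_eq_add, qbin_succ_right]
  field_simp [RatFunc.one_sub_X_pow_ne_zero]
  ring

noncomputable def qAltSum (m n t : ℕ) : RatFunc ℚ :=
  ∑ s ∈ range (m + 1), qbin m s * qbin (n - s) t * q ^ s.choose 2 * (-1) ^ s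

theorem qAltSum_zero_left (n t : ℕ) : qAltSum 0 n t = qbin n t := by
  simp [qAltSum, qbin_zero_right]

theorem qAltSum_self_right {m n : ℕ} (h : m ≤ n) : qAltSum m n n = 1 := by
  rw [qAltSum, sum_eq_single_of_mem 0 (mem_range.2 m.succ_pos)]
  · simp [qbin_zero_right, qbin_self]
  · intro s hs hs0
    rw [qbin_of_lt (a := n - s) (by grind), mul_zero, zero_mul, zero_mul]

theorem qAltSum_succ_left (m n t : ℕ) :
    qAltSum (m + 1) n t = qAltSum m n t - q ^ m * qAltSum m (n - 1) t := by
  have hterm : ∀ s ∈ range (m + 1),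
      qbin (m + 1) (s + 1) * qbin (n - (s + 1)) t * q ^ (s + 1).choose 2 * (-1) ^ (s + 1) =
        qbin m (s + 1) * qbin (n - (s + 1)) t * q ^ (s + 1).choose 2 * (-1) ^ (s + 1) -
          q ^ m * (qbin m s * qbin (n - 1 - s) t * q ^ s.choose 2 * (-1) ^ s) := by
    intro s hs
    have hpow : q ^ (m - s) * q ^ s = q ^ m := by
      rw [← pow_add, Nat.sub_add_cancel (Nat.lt_succ_iff.1 (mem_range.1 hs))]
    rw [qbin_succ_succ_eq_add, Nat.choose_succ_succ', Nat.choose_one_right, Nat.sub_sub,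
      add_comm 1 s, pow_add, ← hpow]
    ring
  have hextend : qAltSum m n t =
      ∑ s ∈ range (m + 1 + 1), qbin m s * qbin (n - s) t * q ^ s.choose 2 * (-1) ^ s := by
    rw [sum_range_succ, qbin_of_lt m.lt_succ_self, qAltSum]
    ring
  rw [hextend, qAltSum, qAltSum, sum_range_succ' _ (m + 1), sum_range_succ' _ (m + 1),
    sum_congr rfl hterm, sum_sub_distrib, ← mul_sum]
  simp only [qbin_zero_right]
  ring

theorem qAltSum_eq {m n t : ℕ} (hm : m ≤ n) (ht : t ≤ n) :
    qAltSum m n t = q ^ (m * (n - t)) * qbin (n - m) (n - t) := by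
  induction m generalizing n with
  | zero => rw [qAltSum_zero_left, zero_mul, pow_zero, one_mul, Nat.sub_zero, qbin_sub_self ht]
  | succ m ih =>
    -- `t = n` is excluded from the recursion, which would need the case `(n - 1, t)` with `t > n - 1`.
    rcases ht.eq_or_lt with rfl | hlt
    · rw [qAltSum_self_right hm, Nat.sub_self, qbin_zero_right]; ring
    obtain ⟨p, hp⟩ : ∃ p, n - t = p + 1 := ⟨n - t - 1, by omega⟩
    obtain ⟨k, hk⟩ : ∃ k, n - m = k + 1 := ⟨n - m - 1, by omega⟩
    rw [qAltSum_succ_left, ih (by omega) hlt.le, ih (by omega) (by omega), hp, hk,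
      show n - 1 - t = p by omega, show n - 1 - m = k by omega, show n - (m + 1) = k by omega,
      qbin_succ_succ_eq_add']
    ring

theorem stmt4 (n r t : ℕ) (hr : r ≤ n) (ht : t ≤ n) :
    ∑ s ∈ Finset.range (n - r + 1),
      qbin (n - r) s * qbin (n - s) t * RatFunc.X ^ s.choose 2 * (-1 : RatFunc ℚ) ^ s
    = RatFunc.X ^ ((n - r) * (n - t)) * qbin r (n - t) := by
  have h := qAltSum_eq (Nat.sub_le n r) ht
  rwa [Nat.sub_sub_self hr] at h
end

section
/- For all positive integers m and n, ∑_{r_1,…,r_m ≤ n} ∏_{k=1}^{m} C(n-r_k, r_{k+1}) = (2^{m(n+1)} - (√5 - 3)^{m(n+1)}) / ((2^m - (√5-3)^m)(√5 - 1)^{mn}), where r_{m+1} := r_1. -/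
/-!
The sum is `trace (Bᵐ)` for the `(n + 1) × (n + 1)` matrix `B i j = C(n - i, j)`, whose transpose
is the matrix of `p ↦ (1 + X)ⁿ p (1 / (1 + X))` on polynomials of degree at most `n`. This operator
is multiplicative in the degree and sends `X + c` to `c (X + c)` whenever `c² = c + 1`, so the
polynomials `(X + ψ)ⁿ⁻ᵏ (X + φ)ᵏ` are eigenvectors, with the pairwise distinct eigenvalues
`ψⁿ⁻ᵏ φᵏ`. Hence `trace (Bᵐ) = ∑ₖ (ψⁿ⁻ᵏ φᵏ)ᵐ`, a geometric sum equal to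
`(φ^(m(n+1)) - ψ^(m(n+1))) / (φᵐ - ψᵐ)`; the stated form follows from `2 = (√5 - 1) φ` and
`√5 - 3 = (√5 - 1) ψ`.
-/

open Finset
open scoped Matrix

theorem Fin.sum_univ_pi_succ {α M : Type*} [Fintype α] [AddCommMonoid M] {m : ℕ}
    (f : (Fin (m + 1) → α) → M) : ∑ q, f q = ∑ a, ∑ r : Fin m → α, f (Fin.cons a r) := by
  rw [← Fintype.sum_prod_type', ← (Fin.consEquiv fun _ => α).sum_comp]
  rfl

namespace Matrix
variable {ι R : Type*} [Fintype ι] [DecidableEq ι] [CommSemiring R]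

theorem pow_succ_apply_eq_sum_prod (M : Matrix ι ι R) (m : ℕ) (i j : ι) :
    (M ^ (m + 1)) i j = ∑ r : Fin m → ι, ∏ k : Fin (m + 1),
      M (Fin.cons (α := fun _ => ι) i r k) (Fin.snoc (α := fun _ => ι) r j k) := by
  induction m generalizing i with
  | zero => simp [Fin.snoc]
  | succ m ih =>
    rw [pow_succ', mul_apply, Fin.sum_univ_pi_succ]
    refine sum_congr rfl fun x _ => ?_
    rw [ih, mul_sum]
    refine sum_congr rfl fun r _ => ?_
    rw [Fin.prod_univ_succ (n := m + 1), ← Fin.cons_snoc_eq_snoc_cons]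
    simp only [Fin.cons_zero, Fin.cons_succ]

theorem trace_pow_succ_eq_sum_prod_finRotate (M : Matrix ι ι R) (m : ℕ) :
    trace (M ^ (m + 1)) = ∑ r : Fin (m + 1) → ι, ∏ k, M (r k) (r (finRotate _ k)) := by
  simp_rw [Fin.sum_univ_pi_succ, trace, diag, pow_succ_apply_eq_sum_prod, Fin.snoc_eq_cons_rotate]

section Field
variable {K : Type*} [Field K]

theorem trace_pow_eq_sum_pow_of_mul_eq_mul_diagonal {A V : Matrix ι ι K} {d : ι → K}
    (hV : IsUnit V) (hAV : A * V = V * diagonal d) (m : ℕ) :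
    trace (A ^ m) = ∑ i, d i ^ m := by
  have hconj : V * diagonal d ^ m = A ^ m * V :=
    SemiconjBy.pow_right (hAV.symm : SemiconjBy V (diagonal d) A) m
  have hA : A ^ m = V * diagonal d ^ m * V⁻¹ := by
    rw [hconj, mul_nonsing_inv_cancel_right _ _ ((isUnit_iff_isUnit_det V).mp hV)]
  rw [hA, trace_conj hV, diagonal_pow, trace_diagonal]
  rfl

theorem trace_pow_eq_sum_pow_of_eigenvectors {A : Matrix ι ι K} {d : ι → K}
    (hd : Function.Injective d) {v : ι → ι → K} (hv : ∀ i, v i ≠ 0)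
    (hAv : ∀ i, A *ᵥ v i = d i • v i) (m : ℕ) :
    trace (A ^ m) = ∑ i, d i ^ m := by
  have hindep : LinearIndependent K v :=
    Module.End.eigenvectors_linearIndependent' (toLin' A) d hd v fun i =>
      Module.End.hasEigenvector_iff.mpr ⟨Module.End.mem_eigenspace_iff.mpr (hAv i), hv i⟩
  refine trace_pow_eq_sum_pow_of_mul_eq_mul_diagonal (V := (of v)ᵀ)
    (linearIndependent_cols_iff_isUnit.mp hindep) ?_ m
  ext a i
  rw [mul_diagonal]
  simpa [mul_apply, mulVec, dotProduct, mul_comm] using congrFun (hAv i) a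

end Field

end Matrix

namespace Polynomial
variable {R : Type*} [CommSemiring R]

theorem reflect_finsetSum {ι : Type*} (N : ℕ) (s : Finset ι) (f : ι → R[X]) :
    reflect N (∑ i ∈ s, f i) = ∑ i ∈ s, reflect N (f i) :=
  map_sum (⟨⟨reflect N, reflect_zero⟩, fun f g => reflect_add f g N⟩ : R[X] →+ R[X]) f s

theorem natDegree_X_add_C_le (c : R) : (X + C c).natDegree ≤ 1 :=
  (natDegree_add_le _ _).trans (by simp [natDegree_X_le])

theorem natDegree_X_add_C_pow_le (c : R) (k : ℕ) : ((X + C c) ^ k).natDegree ≤ k :=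
  (natDegree_pow_le_of_le k (natDegree_X_add_C_le c)).trans_eq (mul_one k)

noncomputable def pascalReflect (n : ℕ) (p : R[X]) : R[X] := (reflect n p).comp (1 + X)

theorem coeff_pascalReflect {n : ℕ} {p : R[X]} (hp : p.natDegree ≤ n) (i : ℕ) :
    (pascalReflect n p).coeff i = ∑ j ∈ range (n + 1), ((n - j).choose i : R) * p.coeff j := by
  have hrefl : reflect n p = ∑ j ∈ range (n + 1), C (p.coeff j) * X ^ (n - j) := by
    conv_lhs => rw [p.as_sum_range_C_mul_X_pow' (Nat.lt_succ_of_le hp), reflect_finsetSum]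
    refine sum_congr rfl fun j hj => ?_
    rw [reflect_C_mul_X_pow, revAt_le (Nat.lt_succ_iff.mp (mem_range.mp hj))]
  rw [pascalReflect, hrefl, sum_comp, finsetSum_coeff]
  refine sum_congr rfl fun j _ => ?_
  rw [mul_comp, C_comp, X_pow_comp, coeff_C_mul, coeff_one_add_X_pow, mul_comm]

theorem pascalReflect_mul {a b : ℕ} {p q : R[X]} (hp : p.natDegree ≤ a) (hq : q.natDegree ≤ b) :
    pascalReflect (a + b) (p * q) = pascalReflect a p * pascalReflect b q := by
  simp only [pascalReflect, reflect_mul p q hp hq, mul_comp]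

theorem pascalReflect_X_add_C {c : R} (hc : c ^ 2 = c + 1) :
    pascalReflect 1 (X + C c) = C c * (X + C c) := by
  have hrefl : reflect 1 (X + C c) = 1 + C c * X := by
    rw [reflect_add, reflect_C, ← pow_one X, reflect_monomial]
    simp
  rw [pascalReflect, hrefl]
  simp only [add_comp, one_comp, mul_comp, C_comp, X_comp]
  calc (1 : R[X]) + C c * (1 + X) = C (c + 1) + C c * X := by simp only [C_add, C_1]; ring
    _ = C c * (X + C c) := by rw [← hc, C_pow]; ring

theorem pascalReflect_X_add_C_pow {c : R} (hc : c ^ 2 = c + 1) (k : ℕ) :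
    pascalReflect k ((X + C c) ^ k) = C (c ^ k) * (X + C c) ^ k := by
  induction k with
  | zero => simp [pascalReflect]
  | succ k ih =>
    rw [pow_succ, pascalReflect_mul (natDegree_X_add_C_pow_le c k) (natDegree_X_add_C_le c), ih,
      pascalReflect_X_add_C hc, pow_succ c, C_mul]
    ring

theorem pascalReflect_X_add_C_pow_mul {c d : R} (hc : c ^ 2 = c + 1) (hd : d ^ 2 = d + 1)
    (a b : ℕ) :
    pascalReflect (a + b) ((X + C c) ^ a * (X + C d) ^ b) =
      C (c ^ a * d ^ b) * ((X + C c) ^ a * (X + C d) ^ b) := by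
  rw [pascalReflect_mul (natDegree_X_add_C_pow_le c a) (natDegree_X_add_C_pow_le d b),
    pascalReflect_X_add_C_pow hc, pascalReflect_X_add_C_pow hd, C_mul]
  ring

noncomputable def pascalReflectMatrix (n : ℕ) : Matrix (Fin (n + 1)) (Fin (n + 1)) R :=
  Matrix.of fun i j => ((n - j : ℕ).choose i : R)

theorem pascalReflectMatrix_mulVec_coeff {n : ℕ} {p : R[X]} (hp : p.natDegree ≤ n) :
    pascalReflectMatrix n *ᵥ (fun i : Fin (n + 1) => p.coeff i) =
      fun i : Fin (n + 1) => (pascalReflect n p).coeff i := by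
  ext i
  rw [coeff_pascalReflect hp,
    ← Fin.sum_univ_eq_sum_range (fun j => ((n - j).choose i : R) * p.coeff j)]
  rfl

end Polynomial

open Real Polynomial
open scoped goldenRatio

theorem goldenConj_pow_mul_goldenRatio_pow_injective (n : ℕ) :
    Function.Injective fun k : Fin (n + 1) => ψ ^ (n - k : ℕ) * φ ^ (k : ℕ) := by
  have habs (k : ℕ) (hk : k ≤ n) : |ψ ^ (n - k) * φ ^ k| = φ ^ (2 * (k : ℤ) - n) := by
    rw [abs_mul, abs_pow, abs_pow, abs_of_neg goldenConj_neg, ← inv_goldenRatio,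
      abs_of_pos goldenRatio_pos, inv_pow, ← zpow_natCast, ← zpow_natCast, ← zpow_neg,
      ← zpow_add₀ goldenRatio_ne_zero]
    push_cast [hk]
    ring_nf
  intro j k hjk
  have h := congrArg abs hjk
  simp only at h
  rw [habs j (Nat.lt_succ_iff.mp j.2), habs k (Nat.lt_succ_iff.mp k.2)] at h
  have := zpow_right_injective₀ goldenRatio_pos one_lt_goldenRatio.ne' h
  ext
  omega

theorem trace_pascalReflectMatrix_pow (n m : ℕ) :
    Matrix.trace (pascalReflectMatrix n ^ m) =
      ∑ k : Fin (n + 1), (ψ ^ (n - k : ℕ) * φ ^ (k : ℕ)) ^ m := by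
  set p : Fin (n + 1) → ℝ[X] := fun k => (X + C ψ) ^ (n - k : ℕ) * (X + C φ) ^ (k : ℕ)
  have hmonic (k : Fin (n + 1)) : (p k).Monic :=
    ((monic_X_add_C ψ).pow _).mul ((monic_X_add_C φ).pow _)
  have hdeg (k : Fin (n + 1)) : (p k).natDegree = n := by
    rw [((monic_X_add_C ψ).pow _).natDegree_mul ((monic_X_add_C φ).pow _), natDegree_pow,
      natDegree_pow, natDegree_X_add_C, natDegree_X_add_C]
    omega
  refine Matrix.trace_pow_eq_sum_pow_of_eigenvectors
    (goldenConj_pow_mul_goldenRatio_pow_injective n) (v := fun k i => (p k).coeff i)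
    (fun k hk => ?_) (fun k => ?_) m
  · have hlead := congrFun hk (Fin.last n)
    rw [Fin.val_last, ← hdeg k, (hmonic k).coeff_natDegree] at hlead
    exact one_ne_zero hlead
  · have heig : pascalReflect n (p k) = C (ψ ^ (n - k : ℕ) * φ ^ (k : ℕ)) * p k := by
      have h := pascalReflect_X_add_C_pow_mul goldenConj_sq goldenRatio_sq (n - k) k
      rwa [Nat.sub_add_cancel (Nat.lt_succ_iff.mp k.2)] at h
    rw [pascalReflectMatrix_mulVec_coeff (hdeg k).le, heig]
    ext i
    exact coeff_C_mul _

theorem sum_goldenConj_pow_mul_goldenRatio_pow_pow (n : ℕ) {m : ℕ} (hm : 0 < m) :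
    ∑ k : Fin (n + 1), (ψ ^ (n - k : ℕ) * φ ^ (k : ℕ)) ^ m =
      (φ ^ (m * (n + 1)) - ψ ^ (m * (n + 1))) / (φ ^ m - ψ ^ m) := by
  have hfib : φ ^ m - ψ ^ m = Nat.fib m * √5 := by
    rw [coe_fib_eq, div_mul_cancel₀ _ (by positivity)]
  have hne : φ ^ m - ψ ^ m ≠ 0 := by
    rw [hfib]
    exact mul_ne_zero (Nat.cast_ne_zero.mpr (Nat.fib_pos.mpr hm).ne') (by positivity)
  rw [eq_div_iff hne, pow_mul, pow_mul, ← geom_sum₂_mul (φ ^ m) (ψ ^ m) (n + 1),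
    Fin.sum_univ_eq_sum_range (fun k => (ψ ^ (n - k) * φ ^ k) ^ m)]
  congr 1
  refine Finset.sum_congr rfl fun k _ => ?_
  rw [Nat.add_sub_cancel, mul_pow, ← pow_mul, ← pow_mul, ← pow_mul, ← pow_mul, mul_comm,
    mul_comm m, mul_comm m]

theorem mul_pow_sub_mul_pow_div {K : Type*} [Field K] {c : K} (hc : c ≠ 0) (x y : K) (m n : ℕ) :
    ((c * x) ^ (m * (n + 1)) - (c * y) ^ (m * (n + 1))) /
        (((c * x) ^ m - (c * y) ^ m) * c ^ (m * n)) =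
      (x ^ (m * (n + 1)) - y ^ (m * (n + 1))) / (x ^ m - y ^ m) := by
  have hden : c ^ m * (x ^ m - y ^ m) * c ^ (m * n) = c ^ (m * (n + 1)) * (x ^ m - y ^ m) := by
    ring
  rw [mul_pow, mul_pow, mul_pow, mul_pow, ← mul_sub, ← mul_sub, hden,
    mul_div_mul_left _ _ (pow_ne_zero _ hc)]

theorem stmt14_general (m n : ℕ) (hm : 0 < m) :
    ∑ r : Fin m → Fin (n + 1), ∏ k : Fin m,
      (((n - (r k : ℕ)).choose (r ⟨((k : ℕ) + 1) % m, Nat.mod_lt _ hm⟩ : ℕ) : ℝ))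
    = (2 ^ (m * (n + 1)) - (Real.sqrt 5 - 3) ^ (m * (n + 1))) /
        ((2 ^ m - (Real.sqrt 5 - 3) ^ m) * (Real.sqrt 5 - 1) ^ (m * n)) := by
  obtain ⟨m, rfl⟩ := Nat.exists_eq_succ_of_ne_zero hm.ne'
  have hcyclic : ∑ r : Fin (m + 1) → Fin (n + 1), ∏ k : Fin (m + 1),
      (((n - (r k : ℕ)).choose (r ⟨((k : ℕ) + 1) % (m + 1), Nat.mod_lt _ hm⟩ : ℕ) : ℝ)) =
      Matrix.trace ((pascalReflectMatrix n)ᵀ ^ (m + 1)) := by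
    rw [Matrix.trace_pow_succ_eq_sum_prod_finRotate]
    refine Fintype.sum_congr _ _ fun r => Fintype.prod_congr _ _ fun k => ?_
    have hrot : finRotate (m + 1) k = ⟨((k : ℕ) + 1) % (m + 1), Nat.mod_lt _ hm⟩ := by
      simp [Fin.ext_iff, Fin.val_add]
    simp [pascalReflectMatrix, hrot]
  have h5 : √5 ^ 2 = 5 := sq_sqrt (by norm_num)
  have htwo : (2 : ℝ) = (√5 - 1) * φ := by rw [goldenRatio]; linear_combination -h5 / 2
  have hthree : √5 - 3 = (√5 - 1) * ψ := by rw [goldenConj]; linear_combination h5 / 2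
  have hc : √5 - 1 ≠ 0 := by nlinarith
  rw [hcyclic, ← Matrix.transpose_pow, Matrix.trace_transpose, trace_pascalReflectMatrix_pow,
    sum_goldenConj_pow_mul_goldenRatio_pow_pow n hm, htwo, hthree, mul_pow_sub_mul_pow_div hc]

theorem stmt14 (m n : ℕ) (hm : 0 < m) (hn : 0 < n) :
    ∑ r : Fin m → Fin (n + 1), ∏ k : Fin m,
      (((n - (r k : ℕ)).choose (r ⟨((k : ℕ) + 1) % m, Nat.mod_lt _ hm⟩ : ℕ) : ℝ))
    = (2 ^ (m * (n + 1)) - (Real.sqrt 5 - 3) ^ (m * (n + 1))) /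
        ((2 ^ m - (Real.sqrt 5 - 3) ^ m) * (Real.sqrt 5 - 1) ^ (m * n)) :=
  stmt14_general m n hm
end
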